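/- arXiv:1107.5363 — 3 statements merged into one kernel-verified Lean document; each statement's English description precedes it below -/
import Mathlib

section
/- If A is a real symmetric n×n matrix, s ≥ 0 is a real number such that sI - A is positive definite, b ∈ ℝⁿ, and Q is an n×r real matrix of full column rank, then bᵀ(sI - A)⁻¹b - bᵀQ(Qᵀ(sI - A)Q)⁻¹Qᵀb ≥ 0. -/
/-! With `M = sI - A` and `P = Q (Qᵀ M Q)⁻¹ Qᵀ`, the error is `bᵀ (M⁻¹ - P) b`. Since `P M P = P`,
the matrix `M⁻¹ - P` equals `(M⁻¹ - P)ᵀ M (M⁻¹ - P)`, a congruence of the positive definite `M`,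
hence positive semidefinite. Full column rank of `Q` makes `Qᵀ M Q` positive definite, so the
inverse in `P` is a genuine one. -/

open Matrix

namespace Matrix

variable {K : Type*} [Field K] {m n : Type*} [Fintype n]

theorem mulVec_injective_of_rank_eq_card {Q : Matrix m n K} (hQ : Q.rank = Fintype.card n) :
    Function.Injective Q.mulVec := by
  rw [mulVec_injective_iff, linearIndependent_iff_card_eq_finrank_span, Set.finrank,
    ← rank_eq_finrank_span_cols, hQ]

variable [Fintype m] [StarRing K] [DecidableEq m] [DecidableEq n]

theorem conjTranspose_mul_mul_inv_sub_compression {M : Matrix m m K} (hM : M.IsHermitian)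
    (hMu : IsUnit M) (Q : Matrix m n K) (hN : IsUnit (Qᴴ * M * Q)) :
    (M⁻¹ - Q * (Qᴴ * M * Q)⁻¹ * Qᴴ)ᴴ * M * (M⁻¹ - Q * (Qᴴ * M * Q)⁻¹ * Qᴴ) =
      M⁻¹ - Q * (Qᴴ * M * Q)⁻¹ * Qᴴ := by
  set N := Qᴴ * M * Q
  set P := Q * N⁻¹ * Qᴴ
  have hMinv : M⁻¹ * M = 1 := nonsing_inv_mul M ((isUnit_iff_isUnit_det M).mp hMu)
  have hS : (M⁻¹ - P)ᴴ = M⁻¹ - P := by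
    rw [conjTranspose_sub, hM.inv.eq, conjTranspose_mul, conjTranspose_mul,
      (isHermitian_conjTranspose_mul_mul Q hM).inv.eq, conjTranspose_conjTranspose]
    simp only [P, N, Matrix.mul_assoc]
  have hPMP : P * M * P = P := by
    calc P * M * P = Q * (N⁻¹ * N) * N⁻¹ * Qᴴ := by simp only [P, N, Matrix.mul_assoc]
      _ = P := by rw [nonsing_inv_mul N ((isUnit_iff_isUnit_det N).mp hN), Matrix.mul_one]
  have hPMS : P * M * (M⁻¹ - P) = 0 := by
    rw [Matrix.mul_sub, Matrix.mul_assoc P M M⁻¹,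
      mul_nonsing_inv M ((isUnit_iff_isUnit_det M).mp hMu), Matrix.mul_one, hPMP, sub_self]
  rw [hS, Matrix.sub_mul, Matrix.sub_mul, hPMS, hMinv, Matrix.one_mul, sub_zero]

theorem PosDef.posSemidef_inv_sub_compression [PartialOrder K] {M : Matrix m m K}
    (hM : M.PosDef) (Q : Matrix m n K) (hN : IsUnit (Qᴴ * M * Q)) :
    (M⁻¹ - Q * (Qᴴ * M * Q)⁻¹ * Qᴴ).PosSemidef := by
  rw [← conjTranspose_mul_mul_inv_sub_compression hM.isHermitian hM.isUnit Q hN]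
  exact hM.posSemidef.conjTranspose_mul_mul_same _

end Matrix

theorem stmt_0_general {n r : ℕ} (A : Matrix (Fin n) (Fin n) ℝ)
    (s : ℝ)
    (hpd : (s • (1 : Matrix (Fin n) (Fin n) ℝ) - A).PosDef)
    (b : Fin n → ℝ) (Q : Matrix (Fin n) (Fin r) ℝ) (hQ : Q.rank = r) :
    0 ≤ b ⬝ᵥ (s • (1 : Matrix (Fin n) (Fin n) ℝ) - A)⁻¹.mulVec b -
      (Qᵀ.mulVec b) ⬝ᵥ (Qᵀ * (s • (1 : Matrix (Fin n) (Fin n) ℝ) - A) * Q)⁻¹.mulVec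
        (Qᵀ.mulVec b) := by
  have hQinj : Function.Injective Q.mulVec :=
    mulVec_injective_of_rank_eq_card (by rw [hQ, Fintype.card_fin])
  have hN := (hpd.conjTranspose_mul_mul_same hQinj).isUnit
  have hgap := (hpd.posSemidef_inv_sub_compression Q hN).dotProduct_mulVec_nonneg b
  rw [conjTranspose_eq_transpose_of_trivial, star_trivial, sub_mulVec, dotProduct_sub,
    ← mulVec_mulVec, ← mulVec_mulVec, dotProduct_mulVec b Q, ← mulVec_transpose] at hgap
  exact hgap

theorem stmt_0 {n r : ℕ} (A : Matrix (Fin n) (Fin n) ℝ) (hA : A.IsSymm)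
    (s : ℝ) (hs : 0 ≤ s)
    (hpd : (s • (1 : Matrix (Fin n) (Fin n) ℝ) - A).PosDef)
    (b : Fin n → ℝ) (Q : Matrix (Fin n) (Fin r) ℝ) (hQ : Q.rank = r) :
    0 ≤ b ⬝ᵥ (s • (1 : Matrix (Fin n) (Fin n) ℝ) - A)⁻¹.mulVec b -
      (Qᵀ.mulVec b) ⬝ᵥ (Qᵀ * (s • (1 : Matrix (Fin n) (Fin n) ℝ) - A) * Q)⁻¹.mulVec
        (Qᵀ.mulVec b) :=
  stmt_0_general A s hpd b Q hQ
end

section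
/- Let λ̃₁, …, λ̃_r be distinct negative real numbers. The 2r×2r block matrix S̃ = [[S₁₁, S₁₂],[S₁₂, S₂₂]], where [S₁₁]_{ij} = -(λ̃_i+λ̃_j)^{-1}, [S₁₂]_{ij} = -(λ̃_i+λ̃_j)^{-2}, [S₂₂]_{ij} = -2(λ̃_i+λ̃_j)^{-3}, is symmetric positive definite. -/
/-!
`S̃` is the Gram matrix, in `L²(0, ∞)`, of the functions `t ↦ e^{λ̃ᵢ t}` and `t ↦ -t e^{λ̃ᵢ t}`,
because `∫₀^∞ (-t)ⁿ e^{a t} dt = -n! / aⁿ⁺¹` for `a < 0`. A Gram matrix is positive definite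
as soon as no nontrivial combination of the functions vanishes almost everywhere. Such a
combination is continuous, hence vanishes on all of `(0, ∞)`; dividing by the fastest growing
exponential shows that its polynomial coefficients tend to `0`, so they vanish one by one.
-/

open Matrix MeasureTheory Set Real Filter Polynomial Topology
open scoped Nat

lemma integral_pow_mul_exp_neg_mul_Ioi (n : ℕ) {c : ℝ} (hc : 0 < c) :
    ∫ t in Ioi (0 : ℝ), t ^ n * exp (-(c * t)) = n ! / c ^ (n + 1) := by
  have key := integral_rpow_mul_exp_neg_mul_Ioi (a := n + 1) (by positivity) hc
  simp_rw [add_sub_cancel_right, rpow_natCast, Gamma_nat_eq_factorial, one_div,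
    inv_rpow hc.le, ← Nat.cast_succ, rpow_natCast] at key
  rw [key, div_eq_inv_mul]

lemma integral_neg_pow_mul_exp_Ioi (n : ℕ) {a : ℝ} (ha : a < 0) :
    ∫ t in Ioi (0 : ℝ), (-t) ^ n * exp (a * t) = -(n ! / a ^ (n + 1)) := by
  have hpow : ∀ t : ℝ, (-t) ^ n * exp (a * t) = (-1) ^ n * (t ^ n * exp (-(-a * t))) := by
    intro t
    rw [neg_pow, neg_mul, neg_neg]
    ring
  simp_rw [hpow, integral_const_mul, integral_pow_mul_exp_neg_mul_Ioi n (neg_pos.mpr ha),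
    neg_pow a, pow_succ (-1 : ℝ)]
  field_simp

lemma integrableOn_neg_pow_mul_exp_Ioi (n : ℕ) {a : ℝ} (ha : a < 0) :
    IntegrableOn (fun t => (-t) ^ n * exp (a * t)) (Ioi 0) :=
  .of_integral_ne_zero <| by
    rw [integral_neg_pow_mul_exp_Ioi n ha]
    simp [ha.ne, n.factorial_ne_zero]

lemma neg_pow_mul_exp_mul_neg_pow_mul_exp (m n : ℕ) (a b t : ℝ) :
    (-t) ^ m * exp (a * t) * ((-t) ^ n * exp (b * t)) = (-t) ^ (m + n) * exp ((a + b) * t) := by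
  rw [pow_add, add_mul, exp_add]
  ring

lemma Polynomial.tendsto_eval_mul_exp_atTop (P : ℝ[X]) {a : ℝ} (ha : a < 0) :
    Tendsto (fun t => P.eval t * exp (a * t)) atTop (𝓝 0) := by
  have hP : (fun t => P.eval t) =O[atTop] fun t => t ^ P.natDegree := by
    simpa using P.isBigO_atTop_of_degree_le (X ^ P.natDegree) (by simp [degree_le_natDegree])
  refine (hP.trans_isLittleO (isLittleO_pow_exp_pos_mul_atTop _ (neg_pos.mpr ha))
    ).tendsto_div_nhds_zero.congr fun t => ?_
  rw [div_eq_mul_inv, ← exp_neg, neg_mul, neg_neg]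

theorem Polynomial.eq_zero_of_eventually_sum_eval_mul_exp_eq_zero (P : ℝ → ℝ[X])
    (s : Finset ℝ) (h : ∀ᶠ t in atTop, ∑ a ∈ s, (P a).eval t * exp (a * t) = 0) :
    ∀ a ∈ s, P a = 0 := by
  induction s using Finset.induction_on_max with
  | empty => simp
  | insert b s hlt ih =>
    have hbs : b ∉ s := fun hb => (hlt b hb).false
    have htail : Tendsto (fun t => ∑ a ∈ s, (P a).eval t * exp ((a - b) * t)) atTop (𝓝 0) := by
      simpa using tendsto_finsetSum s fun a ha =>
        (P a).tendsto_eval_mul_exp_atTop (sub_neg.mpr (hlt a ha))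
    have hlead : (fun t => -∑ a ∈ s, (P a).eval t * exp ((a - b) * t)) =ᶠ[atTop]
        fun t => (P b).eval t := by
      filter_upwards [h] with t ht
      rw [Finset.sum_insert hbs] at ht
      simp_rw [sub_mul, exp_sub, ← mul_div_assoc, ← Finset.sum_div]
      field_simp
      rw [mul_comm t b]
      linear_combination -ht
    have hb : P b = 0 := by
      have := htail.neg.congr' hlead
      rw [neg_zero] at this
      exact leadingCoeff_eq_zero.mp ((tendsto_nhds_iff _).mp this).1
    have hs := ih (h.mono fun t ht => by simpa [Finset.sum_insert hbs, hb] using ht)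
    intro a ha
    rcases Finset.mem_insert.mp ha with rfl | ha
    exacts [hb, hs a ha]

theorem eq_zero_of_ae_sum_mul_neg_pow_mul_exp_eq_zero {ι : Type*} [Fintype ι] {k : ι → ℕ}
    {a : ι → ℝ} (hinj : Function.Injective fun p => (a p, k p)) {c : ι → ℝ}
    (h : ∀ᵐ t ∂volume.restrict (Ioi 0), ∑ p, c p * ((-t) ^ k p * exp (a p * t)) = 0) :
    c = 0 := by
  classical
  have hpos : ∀ t ∈ Ioi (0 : ℝ), ∑ p, c p * ((-t) ^ k p * exp (a p * t)) = 0 :=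
    Measure.eqOn_open_of_ae_eq h isOpen_Ioi (by fun_prop) continuousOn_const
  let P : ℝ → ℝ[X] := fun b => ∑ p with a p = b, C (c p * (-1) ^ k p) * X ^ k p
  have hsum : ∀ t, ∑ p, c p * ((-t) ^ k p * exp (a p * t))
      = ∑ b ∈ Finset.univ.image a, (P b).eval t * exp (b * t) := by
    intro t
    rw [← Finset.sum_fiberwise_of_maps_to fun p _ => Finset.mem_image_of_mem a (Finset.mem_univ p)]
    refine Finset.sum_congr rfl fun b _ => ?_
    simp only [P, eval_finsetSum, Finset.sum_mul]
    refine Finset.sum_congr rfl fun p hp => ?_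
    rw [(Finset.mem_filter.mp hp).2]
    simp [neg_pow t, mul_assoc]
  have hP := eq_zero_of_eventually_sum_eval_mul_exp_eq_zero P _
    ((eventually_gt_atTop 0).mono fun t ht => (hsum t) ▸ hpos t ht)
  ext p
  have hcoeff := congrArg (coeff · (k p)) (hP (a p) (Finset.mem_image_of_mem a (Finset.mem_univ p)))
  simp only [P, finsetSum_coeff, coeff_C_mul_X_pow] at hcoeff
  rw [Finset.sum_eq_single_of_mem p (by simp), if_pos rfl] at hcoeff
  · simpa using hcoeff
  · intro q hq hqp
    exact if_neg fun hk => hqp (hinj (Prod.ext (Finset.mem_filter.mp hq).2 hk.symm))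

theorem Matrix.posDef_of_integral_mul {α ι : Type*} [MeasurableSpace α] [Fintype ι]
    {μ : Measure α} (g : ι → α → ℝ) (hg : ∀ p q, Integrable (fun x => g p x * g q x) μ)
    (hind : ∀ c : ι → ℝ, (∀ᵐ x ∂μ, ∑ p, c p * g p x = 0) → c = 0) :
    (Matrix.of fun p q => ∫ x, g p x * g q x ∂μ).PosDef := by
  refine .of_dotProduct_mulVec_pos ?_ fun c hc => ?_
  · ext p q
    simp [mul_comm]
  have hsq : ∀ x, (∑ p, c p * g p x) ^ 2 = ∑ p, ∑ q, c p * c q * (g p x * g q x) := by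
    intro x
    rw [sq, Finset.sum_mul_sum]
    exact Finset.sum_congr rfl fun p _ => Finset.sum_congr rfl fun q _ => by ring
  have hint : ∀ p, Integrable (fun x => ∑ q, c p * c q * (g p x * g q x)) μ :=
    fun p => integrable_finsetSum _ fun q _ => (hg p q).const_mul _
  have hquad : star c ⬝ᵥ (Matrix.of fun p q => ∫ x, g p x * g q x ∂μ) *ᵥ c
      = ∫ x, (∑ p, c p * g p x) ^ 2 ∂μ := by
    simp_rw [hsq]
    rw [integral_finsetSum _ fun p _ => hint p]
    simp_rw [integral_finsetSum _ fun q _ => (hg _ q).const_mul _, integral_const_mul]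
    simp only [star_trivial, dotProduct, mulVec, of_apply, Finset.mul_sum]
    exact Finset.sum_congr rfl fun p _ => Finset.sum_congr rfl fun q _ => by ring
  rw [hquad]
  refine (integral_nonneg fun x => sq_nonneg _).lt_of_ne' fun h0 => hc (hind c ?_)
  have hint_sq : Integrable (fun x => (∑ p, c p * g p x) ^ 2) μ := by
    simp_rw [hsq]
    exact integrable_finsetSum _ fun p _ => hint p
  filter_upwards [(integral_eq_zero_iff_of_nonneg (fun x => sq_nonneg _) hint_sq).mp h0]
    with x hx
  simpa using hx

/-- The Gram matrix in `L²(0, ∞)` of the functions `t ↦ (-t) ^ k p * exp (a p * t)`. -/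
noncomputable def expPolyGram {ι : Type*} (k : ι → ℕ) (a : ι → ℝ) : Matrix ι ι ℝ :=
  of fun p q => -((k p + k q)! / (a p + a q) ^ (k p + k q + 1))

section expPolyGram

variable {ι : Type*} {k : ι → ℕ} {a : ι → ℝ}

lemma expPolyGram_eq_integral (ha : ∀ p, a p < 0) :
    expPolyGram k a = of fun p q =>
      ∫ t in Ioi 0, (-t) ^ k p * exp (a p * t) * ((-t) ^ k q * exp (a q * t)) := by
  ext p q
  simp only [expPolyGram, of_apply, neg_pow_mul_exp_mul_neg_pow_mul_exp]
  rw [integral_neg_pow_mul_exp_Ioi _ (add_neg (ha p) (ha q))]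

theorem expPolyGram_posDef [Fintype ι] (ha : ∀ p, a p < 0)
    (hinj : Function.Injective fun p => (a p, k p)) : (expPolyGram k a).PosDef := by
  rw [expPolyGram_eq_integral ha]
  refine posDef_of_integral_mul _ (fun p q => ?_)
    fun c => eq_zero_of_ae_sum_mul_neg_pow_mul_exp_eq_zero hinj
  simp_rw [neg_pow_mul_exp_mul_neg_pow_mul_exp]
  exact integrableOn_neg_pow_mul_exp_Ioi _ (add_neg (ha p) (ha q))

end expPolyGram

theorem stmt_7 {r : ℕ} (lam : Fin r → ℝ) (hneg : ∀ i, lam i < 0)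
    (hdist : Function.Injective lam)
    (S11 S12 S22 : Matrix (Fin r) (Fin r) ℝ)
    (hS11 : ∀ i j, S11 i j = -(lam i + lam j)⁻¹)
    (hS12 : ∀ i j, S12 i j = -((lam i + lam j) ^ 2)⁻¹)
    (hS22 : ∀ i j, S22 i j = -2 * ((lam i + lam j) ^ 3)⁻¹) :
    (Matrix.fromBlocks S11 S12 S12 S22).IsSymm ∧
    (Matrix.fromBlocks S11 S12 S12 S22).PosDef := by
  have hgram : fromBlocks S11 S12 S12 S22 = expPolyGram (Sum.elim 0 1) (Sum.elim lam lam) := by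
    ext (i | i) (j | j) <;> simp [expPolyGram, hS11, hS12, hS22, div_eq_mul_inv]
  have hinj : Function.Injective fun p => (Sum.elim lam lam p, (Sum.elim 0 1 p : ℕ)) := by
    rintro (i | i) (j | j) h <;> simp_all [hdist.eq_iff]
  have hpos := expPolyGram_posDef (fun p => by cases p <;> simp [hneg]) hinj
  rw [hgram]
  exact ⟨isHermitian_iff_isSymm.mp hpos.isHermitian, hpos⟩
end

section
/- Let H(s) = K·Π_{i=1}^{n-1}(s-zᵢ)/Π_{j=1}^{n}(s-λ_j) be a real rational function with 0 > λ₁ > z₁ > λ₂ > z₂ > … > z_{n-1} > λₙ and K > 0. Then H admits a partial fraction decomposition H(s) = Σᵢ₌₁ⁿ bᵢ/(s - λᵢ) with all residues bᵢ > 0. -/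
/-!
By Lagrange interpolation at the poles, the numerator `p = K ∏ₖ (X - zₖ)`, of degree `< n`, gives
`p(s) / ∏ⱼ (s - λⱼ) = ∑ᵢ wᵢ p(λᵢ) / (s - λᵢ)` with barycentric weights `wᵢ = ∏_{j ≠ i} (λᵢ - λⱼ)⁻¹`.
Matching the `k`-th pole other than `λᵢ` (namely `λ_{i.succAbove k}`) with the zero `zₖ`, which lies
between this pole and its neighbour, puts `λᵢ` on the same side of both, so `λᵢ - zₖ` and
`λᵢ - λ_{i.succAbove k}` have the same sign. Hence every residue
`K ∏ₖ (λᵢ - zₖ) / (λᵢ - λ_{i.succAbove k})` is positive.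
-/

open Polynomial Finset Lagrange

theorem Lagrange.eval_div_eval_nodal {F ι : Type*} [Field F] [DecidableEq ι] {s : Finset ι}
    {v : ι → F} {p : F[X]} {x : F} (hvs : Set.InjOn v s) (hp : p.degree < #s)
    (hx : ∀ i ∈ s, x ≠ v i) :
    p.eval x / (nodal s v).eval x = ∑ i ∈ s, nodalWeight s v i * p.eval (v i) / (x - v i) := by
  conv_lhs => rw [eq_interpolate hvs hp]
  rw [eval_interpolate_not_at_node _ hx, mul_div_cancel_left₀ _ (eval_nodal_not_at_node hx)]
  exact sum_congr rfl fun i _ => by ring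

theorem Fin.prod_erase_univ {M : Type*} [CommMonoid M] {n : ℕ} (f : Fin (n + 1) → M)
    (i : Fin (n + 1)) : ∏ j ∈ univ.erase i, f j = ∏ k : Fin n, f (i.succAbove k) := by
  rw [← compl_singleton, ← Fin.image_succAbove_univ,
    prod_image fun _ _ _ _ h => i.succAbove_right_injective h]

section Interlacing

variable {m : ℕ} {lam : Fin (m + 1) → ℝ} {z : Fin m → ℝ}

theorem strictAnti_of_interlacing (hinter : ∀ k : Fin m, z k < lam k.castSucc ∧ lam k.succ < z k) :
    StrictAnti lam :=
  Fin.strictAnti_iff_succ_lt.mpr fun k => (hinter k).2.trans (hinter k).1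

theorem div_sub_succAbove_pos_of_interlacing
    (hinter : ∀ k : Fin m, z k < lam k.castSucc ∧ lam k.succ < z k) (i : Fin (m + 1))
    (k : Fin m) : 0 < (lam i - z k) / (lam i - lam (i.succAbove k)) := by
  have hanti := strictAnti_of_interlacing hinter
  rcases lt_or_ge k.castSucc i with h | h
  · rw [Fin.succAbove_of_castSucc_lt _ _ h]
    have : lam i ≤ lam k.succ := hanti.antitone (Fin.castSucc_lt_iff_succ_le.mp h)
    exact div_pos_of_neg_of_neg (by linarith [(hinter k).2]) (by linarith [hanti h])
  · rw [Fin.succAbove_of_le_castSucc _ _ h]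
    have : lam k.castSucc ≤ lam i := hanti.antitone h
    exact div_pos (by linarith [(hinter k).1]) (by linarith [(hinter k).2, (hinter k).1])

theorem nodalWeight_mul_prod_pos_of_interlacing
    (hinter : ∀ k : Fin m, z k < lam k.castSucc ∧ lam k.succ < z k) (i : Fin (m + 1)) :
    0 < nodalWeight univ lam i * ∏ k, (lam i - z k) := by
  rw [nodalWeight, Fin.prod_erase_univ, ← prod_mul_distrib]
  refine prod_pos fun k _ => ?_
  rw [mul_comm, ← div_eq_mul_inv]
  exact div_sub_succAbove_pos_of_interlacing hinter i k

end Interlacing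

theorem stmt_14_general {m : ℕ} (lam : Fin (m + 1) → ℝ) (z : Fin m → ℝ) (K : ℝ)
    (hK : 0 < K)
    (hinter : ∀ i : Fin m, z i < lam i.castSucc ∧ lam i.succ < z i) :
    ∃ b : Fin (m + 1) → ℝ, (∀ i, 0 < b i) ∧
      ∀ s : ℝ, (∀ j, s ≠ lam j) →
        K * (∏ i, (s - z i)) / (∏ j, (s - lam j)) = ∑ i, b i / (s - lam i) := by
  classical
  set p : ℝ[X] := C K * nodal univ z
  have hp : p.degree < #(univ : Finset (Fin (m + 1))) := by
    rw [degree_C_mul hK.ne', degree_nodal, card_univ, card_univ, Fintype.card_fin,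
      Fintype.card_fin]
    exact_mod_cast m.lt_succ_self
  refine ⟨fun i => nodalWeight univ lam i * p.eval (lam i), fun i => ?_, fun s hs => ?_⟩
  · simpa [p, eval_nodal, mul_left_comm _ K] using
      mul_pos hK (nodalWeight_mul_prod_pos_of_interlacing hinter i)
  · have hinj := (strictAnti_of_interlacing hinter).injective
    simpa [p, eval_nodal] using
      eval_div_eval_nodal (p := p) hinj.injOn hp fun j _ => hs j

theorem stmt_14 {m : ℕ} (lam : Fin (m + 1) → ℝ) (z : Fin m → ℝ) (K : ℝ)
    (hK : 0 < K) (hlam0 : lam 0 < 0)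
    (hinter : ∀ i : Fin m, z i < lam i.castSucc ∧ lam i.succ < z i) :
    ∃ b : Fin (m + 1) → ℝ, (∀ i, 0 < b i) ∧
      ∀ s : ℝ, (∀ j, s ≠ lam j) →
        K * (∏ i, (s - z i)) / (∏ j, (s - lam j)) = ∑ i, b i / (s - lam i) :=
  stmt_14_general lam z K hK hinter
end
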